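/- For every integer T ≥ 1 and every x ∈ ℝ^T, the Euclidean norm of the gradient satisfies ‖∇f̄_T(x)‖ ≤ 23·√T. -/

import Mathlib

/-- Ψ(x) = 0 for x ≤ 1/2 and Ψ(x) = exp(1 − 1/(2x−1)²) for x > 1/2. -/
noncomputable def Psi (x : ℝ) : ℝ :=
  if x ≤ 1/2 then 0 else Real.exp (1 - 1/(2*x - 1)^2)

/-- Φ(x) = √e · ∫_{−∞}^x exp(−t²/2) dt. -/
noncomputable def Phi (x : ℝ) : ℝ :=
  Real.sqrt (Real.exp 1) * ∫ t in Set.Iic x, Real.exp (-t^2/2)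

/-- 0-based coordinates of `x : ℝ^T` extended by zero. -/
noncomputable def pad (T : ℕ) (x : Fin T → ℝ) (i : ℕ) : ℝ :=
  if h : i < T then x ⟨i, h⟩ else 0

/-- f̄_T(x) = −Ψ(1)Φ(x_1) + Σ_{i=2}^T [Ψ(−x_{i−1})Φ(−x_i) − Ψ(x_{i−1})Φ(x_i)]. -/
noncomputable def fbar (T : ℕ) (x : Fin T → ℝ) : ℝ :=
  -(Psi 1 * Phi (pad T x 0)) +
    ∑ i ∈ Finset.Ico 1 T,
      (Psi (-(pad T x (i-1))) * Phi (-(pad T x i)) - Psi (pad T x (i-1)) * Phi (pad T x i))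

/-- f̄_T viewed as a function on Euclidean space ℝ^T. -/
noncomputable def fbarE (T : ℕ) (x : EuclideanSpace ℝ (Fin T)) : ℝ :=
  fbar T (fun i => x i)

/-! Each summand of `fbar` is `fbarTerm a b = Ψ(-a)Φ(-b) - Ψ(a)Φ(b)` for two consecutive
coordinates `a, b`. In `b` it is `e√e`-Lipschitz, because `Φ' ≤ √e` and `Ψ(a) + Ψ(-a) ≤ e`
(at most one of them is nonzero). In `a` it is `√(54/e) · √(2πe) = √(108π)`-Lipschitz,
because `Φ ≤ √(2πe)` and `|Ψ(-a) - Ψ(-a')| + |Ψ(a) - Ψ(a')| ≤ sup Ψ' · |a - a'|`.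
Each coordinate occurs once as `a` and once as `b`, so `fbar` is `(√(108π) + e√e)`-, hence
23-Lipschitz for the ℓ¹ norm, and Cauchy–Schwarz gives `23√T` for the Euclidean norm.
A Lipschitz bound controls `fderiv` (which is `0` where the function is not differentiable),
so the differentiability of `fbar` is never needed. -/

open Real MeasureTheory Set

/-- `sup Ψ'`, attained where `(2x - 1)² = 2/3`. -/
noncomputable def psiLipConst : ℝ := √(54 / exp 1)

lemma psiLipConst_nonneg : 0 ≤ psiLipConst := sqrt_nonneg _

lemma mul_exp_one_sub_le_one (t : ℝ) : t * exp (1 - t) ≤ 1 := by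
  have := mul_exp_neg_le_exp_neg_one t
  rw [sub_eq_add_neg, exp_add, mul_left_comm]
  calc exp 1 * (t * exp (-t)) ≤ exp 1 * exp (-1) := by gcongr
    _ = 1 := by rw [← exp_add]; simp

lemma exp_one_sub_inv_sq_mul_le {u : ℝ} (hu : 0 < u) :
    exp (1 - 1 / u ^ 2) * (4 / u ^ 3) ≤ psiLipConst := by
  have hexp : exp (1 - 1 / u ^ 2) ^ 2 * exp 1 = exp (1 - 2 / (3 * u ^ 2)) ^ 3 := by
    rw [← exp_nat_mul, ← exp_nat_mul, ← exp_add]; congr 1; push_cast; field_simp; ring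
  have key : (exp (1 - 1 / u ^ 2) * (4 / u ^ 3)) ^ 2 * exp 1
      = 54 * (2 / (3 * u ^ 2) * exp (1 - 2 / (3 * u ^ 2))) ^ 3 := by
    rw [mul_pow, mul_right_comm, hexp]; field_simp; ring
  rw [psiLipConst, le_sqrt (by positivity) (by positivity), le_div_iff₀ (exp_pos 1), key]
  have : (2 / (3 * u ^ 2) * exp (1 - 2 / (3 * u ^ 2))) ^ 3 ≤ 1 :=
    pow_le_one₀ (by positivity) (mul_exp_one_sub_le_one _)
  linarith

lemma exp_one_sub_inv_sq_le {u : ℝ} (hu : 0 < u) :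
    exp (1 - 1 / u ^ 2) ≤ psiLipConst * (u / 2) := by
  have hexp : exp (1 - 1 / u ^ 2) ^ 2 * exp 1 = exp (1 - 2 / u ^ 2) * exp 2 := by
    rw [← exp_nat_mul, ← exp_add, ← exp_add]; congr 1; push_cast; field_simp; ring
  have key : exp (1 - 1 / u ^ 2) ^ 2 * exp 1
      = exp 2 * (2 / u ^ 2 * exp (1 - 2 / u ^ 2)) * (u ^ 2 / 2) := by
    rw [hexp]; field_simp
  have h := mul_exp_one_sub_le_one (2 / u ^ 2)
  have he2 : exp 2 ≤ 27 := by
    have := exp_one_lt_d9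
    rw [show (2 : ℝ) = 1 + 1 by norm_num, exp_add]
    nlinarith [exp_pos 1]
  rw [psiLipConst, ← sqrt_sq (by positivity : 0 ≤ u / 2), ← sqrt_mul (by positivity),
    le_sqrt (by positivity) (by positivity), div_mul_eq_mul_div, le_div_iff₀ (exp_pos 1), key]
  calc exp 2 * (2 / u ^ 2 * exp (1 - 2 / u ^ 2)) * (u ^ 2 / 2) ≤ 27 * 1 * (u ^ 2 / 2) := by
        gcongr
    _ = 54 * (u / 2) ^ 2 := by ring

lemma Psi_of_le {x : ℝ} (h : x ≤ 1 / 2) : Psi x = 0 := if_pos h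

lemma Psi_of_lt {x : ℝ} (h : 1 / 2 < x) : Psi x = exp (1 - 1 / (2 * x - 1) ^ 2) :=
  if_neg h.not_ge

lemma Psi_nonneg (x : ℝ) : 0 ≤ Psi x := by
  unfold Psi; split_ifs <;> positivity

lemma Psi_le_exp_one (x : ℝ) : Psi x ≤ exp 1 := by
  unfold Psi; split_ifs
  · positivity
  · gcongr; linarith [show 0 ≤ 1 / (2 * x - 1) ^ 2 by positivity]

lemma Psi_add_Psi_neg_le (x : ℝ) : Psi x + Psi (-x) ≤ exp 1 := by
  rcases le_or_gt x (1 / 2) with h | h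
  · linarith [Psi_of_le h, Psi_le_exp_one (-x)]
  · linarith [Psi_of_le (show -x ≤ 1 / 2 by linarith), Psi_le_exp_one x]

lemma Psi_le_mul_sub_half {x : ℝ} (h : 1 / 2 ≤ x) : Psi x ≤ psiLipConst * (x - 1 / 2) := by
  rcases h.eq_or_lt with rfl | h
  · simp [Psi_of_le]
  · rw [Psi_of_lt h, show x - 1 / 2 = (2 * x - 1) / 2 by ring]
    exact exp_one_sub_inv_sq_le (by linarith)

lemma hasDerivAt_Psi {x : ℝ} (h : 1 / 2 < x) :
    HasDerivAt Psi (exp (1 - 1 / (2 * x - 1) ^ 2) * (4 / (2 * x - 1) ^ 3)) x := by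
  have hu : 2 * x - 1 ≠ 0 := by linarith
  have hlin : HasDerivAt (fun y : ℝ => 2 * y - 1) 2 x := by
    simpa using ((hasDerivAt_id x).const_mul 2).sub_const 1
  have hexp : HasDerivAt (fun y => exp (1 - 1 / (2 * y - 1) ^ 2))
      (exp (1 - 1 / (2 * x - 1) ^ 2) * (4 / (2 * x - 1) ^ 3)) x := by
    convert (((hlin.pow 2).inv (pow_ne_zero 2 hu)).const_sub 1).exp using 1
    · simp [one_div]
    · simp only [Pi.inv_apply, Pi.pow_apply, one_div]
      field_simp
      ring
  refine hexp.congr_of_eventuallyEq ?_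
  filter_upwards [Ioi_mem_nhds h] with y hy
  exact Psi_of_lt hy

lemma abs_Psi_sub_Psi_le_of_half_le {a b : ℝ} (ha : 1 / 2 ≤ a) (hb : 1 / 2 ≤ b) :
    |Psi a - Psi b| ≤ psiLipConst * |a - b| := by
  wlog hba : b ≤ a generalizing a b
  · rw [abs_sub_comm, abs_sub_comm a]
    exact this hb ha (le_of_not_ge hba)
  rcases hb.eq_or_lt with rfl | hb
  · rw [Psi_of_le le_rfl, sub_zero, abs_of_nonneg (Psi_nonneg a),
      abs_of_nonneg (sub_nonneg.mpr hba)]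
    exact Psi_le_mul_sub_half ha
  · have hderiv_le (y : ℝ) (hy : y ∈ Ioi (1 / 2)) :
        ‖exp (1 - 1 / (2 * y - 1) ^ 2) * (4 / (2 * y - 1) ^ 3)‖ ≤ psiLipConst := by
      have hu : 0 < 2 * y - 1 := by linarith [mem_Ioi.mp hy]
      rw [norm_of_nonneg (by positivity)]
      exact exp_one_sub_inv_sq_mul_le hu
    simpa only [norm_eq_abs] using
      (convex_Ioi (1 / 2)).norm_image_sub_le_of_norm_hasDerivWithin_le
      (fun y hy => (hasDerivAt_Psi hy).hasDerivWithinAt) hderiv_le hb (hb.trans_le hba)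

lemma Psi_max_half (x : ℝ) : Psi (max x (1 / 2)) = Psi x := by
  rcases le_total x (1 / 2) with h | h
  · rw [max_eq_right h, Psi_of_le h, Psi_of_le le_rfl]
  · rw [max_eq_left h]

lemma abs_Psi_sub_Psi_le (a b : ℝ) :
    |Psi a - Psi b| ≤ psiLipConst * |max a (1 / 2) - max b (1 / 2)| := by
  rw [← Psi_max_half a, ← Psi_max_half b]
  exact abs_Psi_sub_Psi_le_of_half_le (le_max_right _ _) (le_max_right _ _)

lemma abs_max_sub_max_add_abs_max_neg_sub_max_neg_le {c : ℝ} (hc : 0 ≤ c) (a b : ℝ) :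
    |max a c - max b c| + |max (-a) c - max (-b) c| ≤ |a - b| := by
  wlog hba : b ≤ a generalizing a b
  · rw [abs_sub_comm, abs_sub_comm (max (-a) c), abs_sub_comm a]
    exact this b a (le_of_not_ge hba)
  rw [abs_of_nonneg (sub_nonneg.mpr (max_le_max_right c hba)),
    abs_of_nonpos (sub_nonpos.mpr (max_le_max_right c (neg_le_neg hba))),
    abs_of_nonneg (sub_nonneg.mpr hba)]
  rcases le_total a c with h1 | h1 <;> rcases le_total b c with h2 | h2 <;>
    rcases le_total (-a) c with h3 | h3 <;> rcases le_total (-b) c with h4 | h4 <;>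
    simp only [max_eq_left, max_eq_right, *] <;> linarith

/-- `Ψ(x)` depends only on `max x ½` and `Ψ(-x)` only on `max (-x) ½`; together these two clamps
move by at most `|a - b|`, which saves a factor 2 over using the Lipschitz bound twice. -/
lemma abs_Psi_neg_sub_add_abs_Psi_sub_le (a b : ℝ) :
    |Psi (-a) - Psi (-b)| + |Psi a - Psi b| ≤ psiLipConst * |a - b| := by
  have hclamp :=
    abs_max_sub_max_add_abs_max_neg_sub_max_neg_le (by norm_num : (0 : ℝ) ≤ 1 / 2) a b
  calc |Psi (-a) - Psi (-b)| + |Psi a - Psi b|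
      ≤ psiLipConst * |max (-a) (1 / 2) - max (-b) (1 / 2)|
        + psiLipConst * |max a (1 / 2) - max b (1 / 2)| :=
        add_le_add (abs_Psi_sub_Psi_le _ _) (abs_Psi_sub_Psi_le _ _)
    _ ≤ psiLipConst * |a - b| := by
        rw [← mul_add]
        exact mul_le_mul_of_nonneg_left (by linarith) psiLipConst_nonneg

lemma integrable_exp_neg_sq_div_two : Integrable (fun t : ℝ => exp (-t ^ 2 / 2)) := by
  simpa [neg_div, div_eq_inv_mul] using integrable_exp_neg_mul_sq (b := (1 / 2 : ℝ)) (by norm_num)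

lemma Phi_nonneg (x : ℝ) : 0 ≤ Phi x :=
  mul_nonneg (sqrt_nonneg _) (setIntegral_nonneg measurableSet_Iic fun _ _ => (exp_pos _).le)

lemma Phi_le (x : ℝ) : Phi x ≤ √(exp 1) * √(2 * π) := by
  have hgauss : ∫ t : ℝ, exp (-t ^ 2 / 2) = √(2 * π) := by
    simpa [neg_div, div_eq_inv_mul, div_inv_eq_mul, mul_comm] using integral_gaussian (1 / 2)
  rw [Phi, ← hgauss]
  exact mul_le_mul_of_nonneg_left (setIntegral_le_integral integrable_exp_neg_sq_div_two
    (Filter.Eventually.of_forall fun _ => (exp_pos _).le)) (sqrt_nonneg _)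

lemma abs_Phi_sub_Phi_le (a b : ℝ) : |Phi a - Phi b| ≤ √(exp 1) * |a - b| := by
  wlog hba : b ≤ a generalizing a b
  · rw [abs_sub_comm, abs_sub_comm a]
    exact this b a (le_of_not_ge hba)
  have hdiff : Phi a - Phi b = √(exp 1) * ∫ t in Ioc b a, exp (-t ^ 2 / 2) := by
    rw [Phi, Phi, ← mul_sub, intervalIntegral.integral_Iic_sub_Iic
      integrable_exp_neg_sq_div_two.integrableOn integrable_exp_neg_sq_div_two.integrableOn,
      intervalIntegral.integral_of_le hba]
  have hint : ‖∫ t in Ioc b a, exp (-t ^ 2 / 2)‖ ≤ 1 * volume.real (Ioc b a) := by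
    refine norm_setIntegral_le_of_norm_le_const measure_Ioc_lt_top fun t _ => ?_
    rw [norm_of_nonneg (exp_pos _).le, exp_le_one_iff]
    nlinarith [sq_nonneg t]
  rw [hdiff, abs_mul, abs_of_nonneg (sqrt_nonneg _), ← norm_eq_abs (∫ _ in _, _)]
  rw [one_mul, volume_real_Ioc_of_le hba, ← abs_of_nonneg (sub_nonneg.mpr hba)] at hint
  gcongr

noncomputable def fbarTerm (a b : ℝ) : ℝ := Psi (-a) * Phi (-b) - Psi a * Phi b

lemma abs_fbarTerm_sub_fbarTerm_left_le (a a' b : ℝ) :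
    |fbarTerm a b - fbarTerm a' b| ≤ psiLipConst * (√(exp 1) * √(2 * π)) * |a - a'| := by
  have hM : ∀ y, |Phi y| ≤ √(exp 1) * √(2 * π) := fun y => by
    rw [abs_of_nonneg (Phi_nonneg y)]; exact Phi_le y
  calc |fbarTerm a b - fbarTerm a' b|
      = |(Psi (-a) - Psi (-a')) * Phi (-b) - (Psi a - Psi a') * Phi b| := by
        rw [fbarTerm, fbarTerm]; ring_nf
    _ ≤ |Psi (-a) - Psi (-a')| * |Phi (-b)| + |Psi a - Psi a'| * |Phi b| := by
        rw [← abs_mul, ← abs_mul]; exact abs_sub _ _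
    _ ≤ (|Psi (-a) - Psi (-a')| + |Psi a - Psi a'|) * (√(exp 1) * √(2 * π)) := by
        rw [add_mul]; gcongr <;> exact hM _
    _ ≤ psiLipConst * |a - a'| * (√(exp 1) * √(2 * π)) := by
        gcongr; exact abs_Psi_neg_sub_add_abs_Psi_sub_le a a'
    _ = psiLipConst * (√(exp 1) * √(2 * π)) * |a - a'| := by ring

lemma abs_fbarTerm_sub_fbarTerm_right_le (a b b' : ℝ) :
    |fbarTerm a b - fbarTerm a b'| ≤ exp 1 * √(exp 1) * |b - b'| := by
  have hneg : |Phi (-b) - Phi (-b')| ≤ √(exp 1) * |b - b'| := by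
    have := abs_Phi_sub_Phi_le (-b) (-b')
    rwa [neg_sub_neg, abs_sub_comm b'] at this
  calc |fbarTerm a b - fbarTerm a b'|
      = |Psi (-a) * (Phi (-b) - Phi (-b')) - Psi a * (Phi b - Phi b')| := by
        rw [fbarTerm, fbarTerm]; ring_nf
    _ ≤ |Psi (-a) * (Phi (-b) - Phi (-b'))| + |Psi a * (Phi b - Phi b')| := abs_sub _ _
    _ = Psi (-a) * |Phi (-b) - Phi (-b')| + Psi a * |Phi b - Phi b'| := by
        rw [abs_mul, abs_mul, abs_of_nonneg (Psi_nonneg _), abs_of_nonneg (Psi_nonneg _)]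
    _ ≤ Psi (-a) * (√(exp 1) * |b - b'|) + Psi a * (√(exp 1) * |b - b'|) := by
        gcongr
        · exact Psi_nonneg _
        · exact Psi_nonneg _
        · exact abs_Phi_sub_Phi_le b b'
    _ = (Psi a + Psi (-a)) * (√(exp 1) * |b - b'|) := by ring
    _ ≤ exp 1 * (√(exp 1) * |b - b'|) := by gcongr; exact Psi_add_Psi_neg_le a
    _ = exp 1 * √(exp 1) * |b - b'| := by ring

lemma psiLipConst_mul_add_exp_mul_le :
    psiLipConst * (√(exp 1) * √(2 * π)) + exp 1 * √(exp 1) ≤ 23 := by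
  have hA : psiLipConst * (√(exp 1) * √(2 * π)) = √(108 * π) := by
    rw [psiLipConst, ← sqrt_mul (by positivity), ← sqrt_mul (by positivity)]
    congr 1
    field_simp
    ring
  have hpi := pi_lt_d6
  have he := exp_one_lt_d9
  have hA_le : √(108 * π) ≤ 18.42 := by
    rw [sqrt_le_left (by norm_num)]; nlinarith
  have hB_le : √(exp 1) ≤ 1.6488 := by
    rw [sqrt_le_left (by norm_num)]; nlinarith
  rw [hA]
  nlinarith [sqrt_nonneg (exp 1)]

lemma sum_Ico_one_sub_one_le_sum_range {d : ℕ → ℝ} (hd : ∀ i, 0 ≤ d i) (T : ℕ) :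
    ∑ i ∈ Finset.Ico 1 T, d (i - 1) ≤ ∑ i ∈ Finset.range T, d i := by
  rw [Finset.sum_Ico_eq_sum_range]
  simp only [add_tsub_cancel_left]
  exact Finset.sum_le_sum_of_subset_of_nonneg (Finset.range_subset_range.mpr (by omega))
    fun i _ _ => hd i

lemma sum_range_abs_pad_sub_pad (T : ℕ) (x y : Fin T → ℝ) :
    ∑ i ∈ Finset.range T, |pad T x i - pad T y i| = ∑ i, |x i - y i| := by
  rw [← Fin.sum_univ_eq_sum_range]
  simp [pad]

lemma abs_fbar_sub_fbar_le {T : ℕ} (hT : 1 ≤ T) (x y : Fin T → ℝ) :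
    |fbar T x - fbar T y| ≤ 23 * ∑ i, |x i - y i| := by
  set A := psiLipConst * (√(exp 1) * √(2 * π))
  set B := exp 1 * √(exp 1)
  set d : ℕ → ℝ := fun i => |pad T x i - pad T y i|
  have hshift := sum_Ico_one_sub_one_le_sum_range (d := d) (fun _ => abs_nonneg _) T
  have hhead : d 0 + ∑ i ∈ Finset.Ico 1 T, d i = ∑ i ∈ Finset.range T, d i :=
    (Finset.sum_range_eq_add_Ico d hT).symm
  have hdiff : fbar T x - fbar T y = -(Psi 1 * (Phi (pad T x 0) - Phi (pad T y 0))) +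
      ∑ i ∈ Finset.Ico 1 T, (fbarTerm (pad T x (i - 1)) (pad T x i)
        - fbarTerm (pad T y (i - 1)) (pad T y i)) := by
    simp only [fbar, fbarTerm, Finset.sum_sub_distrib]; ring
  have hterm (i : ℕ) : |fbarTerm (pad T x (i - 1)) (pad T x i)
      - fbarTerm (pad T y (i - 1)) (pad T y i)| ≤ A * d (i - 1) + B * d i :=
    (abs_sub_le _ (fbarTerm (pad T y (i - 1)) (pad T x i)) _).trans
      (add_le_add (abs_fbarTerm_sub_fbarTerm_left_le _ _ _)
        (abs_fbarTerm_sub_fbarTerm_right_le _ _ _))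
  have hhead_term : |Psi 1 * (Phi (pad T x 0) - Phi (pad T y 0))| ≤ B * d 0 := by
    rw [abs_mul, abs_of_nonneg (Psi_nonneg 1), mul_assoc]
    exact mul_le_mul (Psi_le_exp_one 1) (abs_Phi_sub_Phi_le _ _) (abs_nonneg _) (exp_pos 1).le
  calc |fbar T x - fbar T y|
      ≤ B * d 0 + ∑ i ∈ Finset.Ico 1 T, (A * d (i - 1) + B * d i) := by
        rw [hdiff]
        refine (abs_add_le _ _).trans (add_le_add ?_ ?_)
        · rwa [abs_neg]
        · exact (Finset.abs_sum_le_sum_abs _ _).trans (Finset.sum_le_sum fun i _ => hterm i)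
    _ = A * ∑ i ∈ Finset.Ico 1 T, d (i - 1) + B * (d 0 + ∑ i ∈ Finset.Ico 1 T, d i) := by
        rw [Finset.sum_add_distrib, ← Finset.mul_sum, ← Finset.mul_sum]; ring
    _ ≤ (A + B) * ∑ i ∈ Finset.range T, d i := by
        rw [hhead, add_mul]
        gcongr
        exact mul_nonneg psiLipConst_nonneg (by positivity)
    _ ≤ 23 * ∑ i, |x i - y i| := by
        rw [sum_range_abs_pad_sub_pad]
        gcongr
        exact psiLipConst_mul_add_exp_mul_le

lemma sum_abs_le_sqrt_card_mul_norm {ι : Type*} [Fintype ι] (x : EuclideanSpace ℝ ι) :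
    ∑ i, |x i| ≤ √(Fintype.card ι) * ‖x‖ := by
  rw [EuclideanSpace.norm_eq, ← sqrt_mul (Nat.cast_nonneg _),
    le_sqrt (Finset.sum_nonneg fun i _ => abs_nonneg _) (by positivity)]
  simpa [sq_abs] using sq_sum_le_card_mul_sum_sq (s := Finset.univ) (f := fun i => |x i|)

/-- For every `T ≥ 1` and `x ∈ ℝ^T`, the Euclidean norm of the gradient of f̄_T
satisfies ‖∇f̄_T(x)‖ ≤ 23·√T. -/
theorem stmt11 (T : ℕ) (hT : 1 ≤ T) (x : EuclideanSpace ℝ (Fin T)) :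
    ‖gradient (fbarE T) x‖ ≤ 23 * Real.sqrt T := by
  rw [gradient, LinearIsometryEquiv.norm_map]
  refine norm_fderiv_le_of_lip' ℝ (by positivity) (Filter.Eventually.of_forall fun y => ?_)
  calc ‖fbarE T y - fbarE T x‖ ≤ 23 * ∑ i, |(y - x) i| := by
        simpa only [norm_eq_abs, PiLp.sub_apply, fbarE] using
          abs_fbar_sub_fbar_le hT (fun i => y i) (fun i => x i)
    _ ≤ 23 * (Real.sqrt T * ‖y - x‖) := by
        gcongr
        simpa using sum_abs_le_sqrt_card_mul_norm (y - x)
    _ = 23 * Real.sqrt T * ‖y - x‖ := (mul_assoc _ _ _).symm
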